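/- arXiv:2102.09745 — 7 statements merged into one kernel-verified Lean document; each statement's English description precedes it below -/
import Mathlib

section
/- (Deterministic Policy Gradient Theorem, average-reward setting) Under the stated hypotheses, J is differentiable in θ and its gradient is given by ∇_θ J(θ) = Σ_{s∈S} d^θ(s) · (D_θ μ_θ(s))ᵀ (∇_a Q_θ(s,a)|_{a=μ_θ(s)}), i.e. the gradient of the long-run average reward equals the expectation under the stationary distribution d^θ of ∇_θ μ_θ(s) applied to the action-gradient of the differential action-value function evaluated at a = μ_θ(s). In particular the gradient of J does not involve the gradient of the stationary distribution. -/
open scoped Topology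

set_option maxHeartbeats 2000000 in
/-- **Deterministic Policy Gradient Theorem (average-reward setting).**
`S` is a finite nonempty state space, actions live in `ℝ^k`, parameters in `ℝ^m`.
Under differentiability assumptions on the kernel `P`, the policy `μ`, the reward `R`,
the stationary distribution `d`, and the differential action-value function `Q`
satisfying the Poisson equation, the long-run average reward `J` is differentiable and
`∇_θ J(θ) = ∑_s d^θ(s) • (D_θ μ_θ(s))ᵀ (∇_a Q_θ(s,a)|_{a = μ_θ(s)})`. -/
theorem stmt_0
    {S : Type*} [Fintype S] [Nonempty S] {m k : ℕ}
    (P : S → EuclideanSpace ℝ (Fin k) → S → ℝ)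
    (hP_nonneg : ∀ s a s', 0 ≤ P s a s')
    (hP_sum : ∀ s a, ∑ s', P s a s' = 1)
    (hP_diff : ∀ s s', Differentiable ℝ (fun a => P s a s'))
    (μ : EuclideanSpace ℝ (Fin m) → S → EuclideanSpace ℝ (Fin k))
    (hμ_diff : ∀ s, Differentiable ℝ (fun θ => μ θ s))
    (R : S → EuclideanSpace ℝ (Fin k) → ℝ)
    (hR_diff : ∀ s, Differentiable ℝ (fun a => R s a))
    (d : EuclideanSpace ℝ (Fin m) → S → ℝ)
    (hd_nonneg : ∀ θ s, 0 ≤ d θ s)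
    (hd_sum : ∀ θ, ∑ s, d θ s = 1)
    (hd_stat : ∀ θ s', ∑ s, d θ s * P s (μ θ s) s' = d θ s')
    (hd_diff : ∀ s, Differentiable ℝ (fun θ => d θ s))
    (J : EuclideanSpace ℝ (Fin m) → ℝ)
    (hJ : ∀ θ, J θ = ∑ s, d θ s * R s (μ θ s))
    (Q : EuclideanSpace ℝ (Fin m) → S → EuclideanSpace ℝ (Fin k) → ℝ)
    (hQ_diff : ∀ s, Differentiable ℝ
      (fun p : EuclideanSpace ℝ (Fin m) × EuclideanSpace ℝ (Fin k) => Q p.1 s p.2))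
    (hPoisson : ∀ θ s a,
      Q θ s a = R s a - J θ + ∑ s', P s a s' * Q θ s' (μ θ s')) :
    ∀ θ, DifferentiableAt ℝ J θ ∧
      gradient J θ = ∑ s, d θ s •
        ContinuousLinearMap.adjoint (fderiv ℝ (fun θ' => μ θ' s) θ)
          (gradient (fun a => Q θ s a) (μ θ s)) := by
  classical
  intro θ
  have hV_diff : ∀ s, Differentiable ℝ (fun θ' => Q θ' s (μ θ' s)) := fun s =>
    (hQ_diff s).comp (differentiable_id.prodMk (hμ_diff s))
  have hJfun : J = fun θ' => ∑ s, d θ' s * R s (μ θ' s) := funext hJ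
  have hJ_diff : Differentiable ℝ J := by
    rw [hJfun]
    exact Differentiable.fun_sum fun s _ => (hd_diff s).mul ((hR_diff s).comp (hμ_diff s))
  refine ⟨hJ_diff θ, ?_⟩
  set DJ : EuclideanSpace ℝ (Fin m) →L[ℝ] ℝ := fderiv ℝ J θ with hDJ
  set Dμ : S → (EuclideanSpace ℝ (Fin m) →L[ℝ] EuclideanSpace ℝ (Fin k)) :=
    fun s => fderiv ℝ (fun θ' => μ θ' s) θ with hDμ
  set B : S → (EuclideanSpace ℝ (Fin k) →L[ℝ] ℝ) :=
    fun s => fderiv ℝ (fun a => Q θ s a) (μ θ s) with hB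
  set DV : S → (EuclideanSpace ℝ (Fin m) →L[ℝ] ℝ) :=
    fun s => fderiv ℝ (fun θ' => Q θ' s (μ θ' s)) θ with hDV
  set F : S → (EuclideanSpace ℝ (Fin m) × EuclideanSpace ℝ (Fin k) →L[ℝ] ℝ) :=
    fun s => fderiv ℝ (fun p : EuclideanSpace ℝ (Fin m) × EuclideanSpace ℝ (Fin k) =>
      Q p.1 s p.2) (θ, μ θ s) with hF
  have hFd : ∀ s, HasFDerivAt
      (fun p : EuclideanSpace ℝ (Fin m) × EuclideanSpace ℝ (Fin k) => Q p.1 s p.2)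
      (F s) (θ, μ θ s) :=
    fun s => ((hQ_diff s) (θ, μ θ s)).hasFDerivAt
  -- B s as a partial derivative of the full map
  have hBpart : ∀ s, B s = (F s).comp
      ((0 : EuclideanSpace ℝ (Fin k) →L[ℝ] EuclideanSpace ℝ (Fin m)).prod
        (ContinuousLinearMap.id ℝ (EuclideanSpace ℝ (Fin k)))) := by
    intro s
    have h : HasFDerivAt (fun a : EuclideanSpace ℝ (Fin k) => Q θ s a)
        ((F s).comp ((0 : EuclideanSpace ℝ (Fin k) →L[ℝ] EuclideanSpace ℝ (Fin m)).prod
          (ContinuousLinearMap.id ℝ (EuclideanSpace ℝ (Fin k))))) (μ θ s) :=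
      (hFd s).comp (μ θ s) ((hasFDerivAt_const θ (μ θ s)).prodMk (hasFDerivAt_id (μ θ s)))
    rw [hB]
    exact h.fderiv
  set A : S → (EuclideanSpace ℝ (Fin m) →L[ℝ] ℝ) :=
    fun s => (F s).comp ((ContinuousLinearMap.id ℝ (EuclideanSpace ℝ (Fin m))).prod
      (0 : EuclideanSpace ℝ (Fin m) →L[ℝ] EuclideanSpace ℝ (Fin k))) with hA
  have hApart : ∀ s, HasFDerivAt (fun θ' => Q θ' s (μ θ s)) (A s) θ :=
    fun s => (hFd s).comp (f := fun θ' => (θ', μ θ s)) θ ((hasFDerivAt_id (𝕜 := ℝ) θ).prodMk (hasFDerivAt_const (μ θ s) θ))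
  -- Step 1 : DV s = A s + (B s).comp (Dμ s)
  have step1 : ∀ s, DV s = A s + (B s).comp (Dμ s) := by
    intro s
    have h : HasFDerivAt (fun θ' => Q θ' s (μ θ' s))
        ((F s).comp ((ContinuousLinearMap.id ℝ (EuclideanSpace ℝ (Fin m))).prod (Dμ s))) θ :=
      (hFd s).comp (f := fun θ' => (θ', μ θ' s)) θ ((hasFDerivAt_id θ).prodMk ((hμ_diff s θ).hasFDerivAt))
    rw [show DV s = fderiv ℝ (fun θ' => Q θ' s (μ θ' s)) θ from rfl, h.fderiv]
    ext x
    simp only [ContinuousLinearMap.comp_apply, ContinuousLinearMap.prod_apply,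
      ContinuousLinearMap.coe_id', id_eq, ContinuousLinearMap.zero_apply,
      ContinuousLinearMap.add_apply, hBpart s, hA]
    rw [← map_add]
    simp
  -- Step 2 : A s = -DJ + ∑ s', P s (μ θ s) s' • DV s'
  have step2 : ∀ s, A s = -DJ + ∑ s', P s (μ θ s) s' • DV s' := by
    intro s
    have hfun : (fun θ' => Q θ' s (μ θ s)) =
        fun θ' => R s (μ θ s) - J θ' + ∑ s', P s (μ θ s) s' * Q θ' s' (μ θ' s') :=
      funext fun θ' => hPoisson θ' s (μ θ s)
    have hR' : HasFDerivAt
        (fun θ' => R s (μ θ s) - J θ' + ∑ s', P s (μ θ s) s' * Q θ' s' (μ θ' s'))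
        ((0 : EuclideanSpace ℝ (Fin m) →L[ℝ] ℝ) - DJ + ∑ s', P s (μ θ s) s' • DV s') θ := by
      refine HasFDerivAt.add ?_ ?_
      · exact (hasFDerivAt_const (R s (μ θ s)) θ).sub (hJ_diff θ).hasFDerivAt
      · exact HasFDerivAt.fun_sum fun s' _ => ((hV_diff s' θ).hasFDerivAt).const_mul _
    have hA' := hApart s
    rw [hfun] at hA'
    rw [hA'.unique hR', zero_sub]
  -- Step 3 : combine
  have step3 : ∀ s, DV s = (B s).comp (Dμ s) - DJ + ∑ s', P s (μ θ s) s' • DV s' := by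
    intro s
    rw [step1 s, step2 s]
    abel
  -- Step 4 : DJ = ∑ s, d θ s • ((B s).comp (Dμ s))
  have step4 : DJ = ∑ s, d θ s • ((B s).comp (Dμ s)) := by
    have hsum : ∑ s, d θ s • DV s =
        (∑ s, d θ s • ((B s).comp (Dμ s))) - DJ + ∑ s, d θ s • DV s := by
      calc ∑ s, d θ s • DV s
          = ∑ s, (d θ s • ((B s).comp (Dμ s)) - d θ s • DJ
              + ∑ s', (d θ s * P s (μ θ s) s') • DV s') := by
            refine Finset.sum_congr rfl fun s _ => ?_
            rw [step3 s, smul_add, smul_sub, Finset.smul_sum]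
            congr 1
            exact Finset.sum_congr rfl fun s' _ => smul_smul _ _ _
        _ = (∑ s, d θ s • ((B s).comp (Dμ s))) - (∑ s, d θ s) • DJ
              + ∑ s', (∑ s, d θ s * P s (μ θ s) s') • DV s' := by
            rw [Finset.sum_add_distrib, Finset.sum_sub_distrib, Finset.sum_smul,
              Finset.sum_comm]
            congr 1
            exact Finset.sum_congr rfl fun s' _ => (Finset.sum_smul).symm
        _ = (∑ s, d θ s • ((B s).comp (Dμ s))) - DJ + ∑ s', d θ s' • DV s' := by
            rw [hd_sum θ, one_smul]
            congr 1
            exact Finset.sum_congr rfl fun s' _ => by rw [hd_stat θ s']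
    have h0 : (∑ s, d θ s • ((B s).comp (Dμ s))) - DJ = 0 :=
      add_eq_right.mp hsum.symm
    exact (sub_eq_zero.mp h0).symm
  -- Step 5 : translate to gradients
  have hgrad : ∀ s, gradient (fun a => Q θ s a) (μ θ s) =
      (InnerProductSpace.toDual ℝ (EuclideanSpace ℝ (Fin k))).symm (B s) := fun s => rfl
  have hgJ : gradient J θ =
      (InnerProductSpace.toDual ℝ (EuclideanSpace ℝ (Fin m))).symm DJ := rfl
  have key : (InnerProductSpace.toDual ℝ (EuclideanSpace ℝ (Fin m)))
      (∑ s, d θ s • ContinuousLinearMap.adjoint (fderiv ℝ (fun θ' => μ θ' s) θ)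
        (gradient (fun a => Q θ s a) (μ θ s))) = DJ := by
    refine ContinuousLinearMap.ext fun y => ?_
    rw [InnerProductSpace.toDual_apply_apply, sum_inner, step4, ContinuousLinearMap.sum_apply]
    refine Finset.sum_congr rfl fun s _ => ?_
    rw [real_inner_smul_left, ContinuousLinearMap.smul_apply]
    congr 1
    rw [ContinuousLinearMap.adjoint_inner_left, hgrad s,
      InnerProductSpace.toDual_symm_apply]
    rfl
  rw [hgJ, ← key, LinearIsometryEquiv.symm_apply_apply]
end

section
/- (Per-state gradient identity in the proof of the Deterministic Policy Gradient Theorem) Under the stated hypotheses, for every state s ∈ S and every parameter θ, ∇_θ J(θ) = (D_θ μ_θ(s))ᵀ (∇_a Q_θ(s,a)|_{a=μ_θ(s)}) + Σ_{s'∈S} P(s'|s,μ_θ(s)) ∇_θ V_θ(s') − ∇_θ V_θ(s). That is, differentiating the Poisson/Bellman equation at a = μ_θ(s) expresses the gradient of the long-run average reward through the one-step transition applied to the gradients of the differential value function. -/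
open scoped Topology

/-- **Per-state gradient identity** in the proof of the Deterministic Policy Gradient
Theorem: for every state `s` and parameter `θ`,
`∇_θ J(θ) = (D_θ μ_θ(s))ᵀ (∇_a Q_θ(s,a)|_{a=μ_θ(s)})
            + ∑_{s'} P(s'|s,μ_θ(s)) ∇_θ V_θ(s') − ∇_θ V_θ(s)`. -/
theorem stmt_1
    {S : Type*} [Fintype S] [Nonempty S] {m k : ℕ}
    (P : S → EuclideanSpace ℝ (Fin k) → S → ℝ)
    (hP_nonneg : ∀ s a s', 0 ≤ P s a s')
    (hP_sum : ∀ s a, ∑ s', P s a s' = 1)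
    (hP_diff : ∀ s s', Differentiable ℝ (fun a => P s a s'))
    (μ : EuclideanSpace ℝ (Fin m) → S → EuclideanSpace ℝ (Fin k))
    (hμ_diff : ∀ s, Differentiable ℝ (fun θ => μ θ s))
    (R : S → EuclideanSpace ℝ (Fin k) → ℝ)
    (hR_diff : ∀ s, Differentiable ℝ (fun a => R s a))
    (d : EuclideanSpace ℝ (Fin m) → S → ℝ)
    (hd_nonneg : ∀ θ s, 0 ≤ d θ s)
    (hd_sum : ∀ θ, ∑ s, d θ s = 1)
    (hd_stat : ∀ θ s', ∑ s, d θ s * P s (μ θ s) s' = d θ s')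
    (hd_diff : ∀ s, Differentiable ℝ (fun θ => d θ s))
    (J : EuclideanSpace ℝ (Fin m) → ℝ)
    (hJ : ∀ θ, J θ = ∑ s, d θ s * R s (μ θ s))
    (Q : EuclideanSpace ℝ (Fin m) → S → EuclideanSpace ℝ (Fin k) → ℝ)
    (hQ_diff : ∀ s, Differentiable ℝ
      (fun p : EuclideanSpace ℝ (Fin m) × EuclideanSpace ℝ (Fin k) => Q p.1 s p.2))
    (hPoisson : ∀ θ s a,
      Q θ s a = R s a - J θ + ∑ s', P s a s' * Q θ s' (μ θ s'))
    (V : EuclideanSpace ℝ (Fin m) → S → ℝ)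
    (hV : ∀ θ s, V θ s = Q θ s (μ θ s))
    (hV_diff : ∀ s, Differentiable ℝ (fun θ => V θ s)) :
    ∀ θ s, DifferentiableAt ℝ J θ ∧
      gradient J θ =
        ContinuousLinearMap.adjoint (fderiv ℝ (fun θ' => μ θ' s) θ)
          (gradient (fun a => Q θ s a) (μ θ s))
        + ∑ s', P s (μ θ s) s' • gradient (fun θ' => V θ' s') θ
        - gradient (fun θ' => V θ' s) θ := by
  intro θ s
  have hJ' : J = fun θ' => R s (μ θ' s) - V θ' s + ∑ s', P s (μ θ' s) s' * V θ' s' := by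
    funext θ'
    have h1 := hPoisson θ' s (μ θ' s)
    simp_rw [← hV] at h1
    linarith
  set a0 := μ θ s with ha0
  set Dμ := fderiv ℝ (fun θ' => μ θ' s) θ with hDμdef
  have hDμ : HasFDerivAt (fun θ' => μ θ' s) Dμ θ := ((hμ_diff s) θ).hasFDerivAt
  have hR' : HasFDerivAt (fun a => R s a) (fderiv ℝ (fun a => R s a) a0) a0 :=
    ((hR_diff s) a0).hasFDerivAt
  have hP' : ∀ s', HasFDerivAt (fun a => P s a s') (fderiv ℝ (fun a => P s a s') a0) a0 :=
    fun s' => ((hP_diff s s') a0).hasFDerivAt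
  have hV' : ∀ s', HasFDerivAt (fun θ' => V θ' s') (fderiv ℝ (fun θ' => V θ' s') θ) θ :=
    fun s' => ((hV_diff s') θ).hasFDerivAt
  -- derivative of J
  have hG : HasFDerivAt J
      (((fderiv ℝ (fun a => R s a) a0).comp Dμ - fderiv ℝ (fun θ' => V θ' s) θ) +
        ∑ s', (P s a0 s' • fderiv ℝ (fun θ' => V θ' s') θ +
          V θ s' • ((fderiv ℝ (fun a => P s a s') a0).comp Dμ))) θ := by
    rw [hJ']
    exact ((hR'.comp θ hDμ).sub (hV' s)).add
      (HasFDerivAt.fun_sum fun s' _ => ((hP' s').comp θ hDμ).mul (hV' s'))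
  -- derivative of a ↦ Q θ s a
  have hQa : HasFDerivAt (fun a => Q θ s a)
      ((fderiv ℝ (fun a => R s a) a0 +
        ∑ s', V θ s' • fderiv ℝ (fun a => P s a s') a0)) a0 := by
    have hq : (fun a => Q θ s a)
        = fun a => (R s a - J θ) + ∑ s', P s a s' * V θ s' := by
      funext a
      simp_rw [hPoisson θ s a, ← hV]
    rw [hq]
    exact (hR'.sub_const (J θ)).add
      (HasFDerivAt.fun_sum fun s' _ => (hP' s').mul_const (V θ s'))
  refine ⟨hG.differentiableAt, ?_⟩
  apply ext_inner_right ℝ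
  intro v
  have hgJ : ∀ x, inner ℝ (gradient J θ) x = fderiv ℝ J θ x := fun x => by
    simp [gradient, InnerProductSpace.toDual_symm_apply]
  have hgQ : ∀ x, (inner ℝ (gradient (fun a => Q θ s a) a0) x : ℝ)
      = fderiv ℝ (fun a => Q θ s a) a0 x := fun x => by
    simp [gradient, InnerProductSpace.toDual_symm_apply]
  have hgV : ∀ s' x, (inner ℝ (gradient (fun θ' => V θ' s') θ) x : ℝ)
      = fderiv ℝ (fun θ' => V θ' s') θ x := fun s' x => by
    simp [gradient, InnerProductSpace.toDual_symm_apply]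
  rw [hgJ v, hG.fderiv]
  rw [inner_sub_left, inner_add_left, ContinuousLinearMap.adjoint_inner_left,
    hgQ, hQa.fderiv, sum_inner, hgV s v]
  simp only [inner_smul_left, RCLike.conj_to_real, hgV,
    ContinuousLinearMap.add_apply, ContinuousLinearMap.sub_apply,
    ContinuousLinearMap.sum_apply, ContinuousLinearMap.smul_apply,
    ContinuousLinearMap.comp_apply, smul_eq_mul, Finset.sum_add_distrib]
  ring
end

section
/- (Local Deterministic Policy Gradient Theorem, on-policy multi-agent case) Suppose the joint policy factorizes over N agents: θ = (θ^1,…,θ^N) with θ^i ∈ ℝ^{m_i} and μ_θ(s) = (μ^1_{θ^1}(s),…,μ^N_{θ^N}(s)) ∈ ℝ^{k_1}×⋯×ℝ^{k_N}, where agent i's policy component μ^i_{θ^i}(s) depends only on its own parameter block θ^i. Then under the hypotheses guaranteeing the deterministic policy gradient theorem, for every agent i the partial gradient of the long-run average reward with respect to θ^i exists and is given by ∇_{θ^i} J(θ) = Σ_{s∈S} d^θ(s) · (D_{θ^i} μ^i_{θ^i}(s))ᵀ (∇_{a^i} Q_θ(s, (μ^{-i}_{θ^{-i}}(s), a^i))|_{a^i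 = μ^i_{θ^i}(s)}), where μ^{-i}_{θ^{-i}}(s) denotes the actions of all agents other than i and the gradient in the last factor is taken only in agent i's action coordinates. -/
open InnerProductSpace in
theorem toDual_symm_comp_aux {E F : Type*} [NormedAddCommGroup E] [InnerProductSpace ℝ E]
    [CompleteSpace E] [NormedAddCommGroup F] [InnerProductSpace ℝ F] [CompleteSpace F]
    (B : E →L[ℝ] F) (L : F →L[ℝ] ℝ) :
    (toDual ℝ E).symm (L.comp B) = ContinuousLinearMap.adjoint B ((toDual ℝ F).symm L) := by
  apply ext_inner_right ℝ
  intro z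
  rw [ContinuousLinearMap.adjoint_inner_left, toDual_symm_apply, toDual_symm_apply]
  rfl



open scoped Topology

/-- **Local Deterministic Policy Gradient Theorem** (on-policy multi-agent case).
The joint policy factorizes over `N` agents, agent `i`'s component `μⁱ_{θⁱ}(s)` depending
only on its own parameter block. Then for each agent `i`, the partial gradient of the
long-run average reward `J` with respect to `θⁱ` exists and is given by
`∇_{θⁱ} J(θ) = ∑_s d^θ(s) • (D_{θⁱ} μⁱ_{θⁱ}(s))ᵀ
  (∇_{aⁱ} Q_θ(s, (μ^{-i}_{θ^{-i}}(s), aⁱ))|_{aⁱ = μⁱ_{θⁱ}(s)})`. -/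
theorem stmt_2
    {S : Type*} [Fintype S] [Nonempty S] {N : ℕ} {m k : Fin N → ℕ}
    (μi : ∀ i : Fin N, EuclideanSpace ℝ (Fin (m i)) → S → EuclideanSpace ℝ (Fin (k i)))
    (hμ_diff : ∀ i s, Differentiable ℝ (fun ti => μi i ti s))
    (μ : (∀ i : Fin N, EuclideanSpace ℝ (Fin (m i))) → S →
      (∀ i : Fin N, EuclideanSpace ℝ (Fin (k i))))
    (hμ : ∀ θ s i, μ θ s i = μi i (θ i) s)
    (P : S → (∀ i : Fin N, EuclideanSpace ℝ (Fin (k i))) → S → ℝ)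
    (hP_nonneg : ∀ s a s', 0 ≤ P s a s')
    (hP_sum : ∀ s a, ∑ s', P s a s' = 1)
    (hP_diff : ∀ s s', Differentiable ℝ (fun a => P s a s'))
    (R : S → (∀ i : Fin N, EuclideanSpace ℝ (Fin (k i))) → ℝ)
    (hR_diff : ∀ s, Differentiable ℝ (fun a => R s a))
    (d : (∀ i : Fin N, EuclideanSpace ℝ (Fin (m i))) → S → ℝ)
    (hd_nonneg : ∀ θ s, 0 ≤ d θ s)
    (hd_sum : ∀ θ, ∑ s, d θ s = 1)
    (hd_stat : ∀ θ s', ∑ s, d θ s * P s (μ θ s) s' = d θ s')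
    (hd_diff : ∀ s, Differentiable ℝ (fun θ => d θ s))
    (J : (∀ i : Fin N, EuclideanSpace ℝ (Fin (m i))) → ℝ)
    (hJ : ∀ θ, J θ = ∑ s, d θ s * R s (μ θ s))
    (Q : (∀ i : Fin N, EuclideanSpace ℝ (Fin (m i))) → S →
      (∀ i : Fin N, EuclideanSpace ℝ (Fin (k i))) → ℝ)
    (hQ_diff : ∀ s, Differentiable ℝ
      (fun p : (∀ i : Fin N, EuclideanSpace ℝ (Fin (m i))) ×
        (∀ i : Fin N, EuclideanSpace ℝ (Fin (k i))) => Q p.1 s p.2))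
    (hPoisson : ∀ θ s a,
      Q θ s a = R s a - J θ + ∑ s', P s a s' * Q θ s' (μ θ s')) :
    ∀ θ (i : Fin N),
      DifferentiableAt ℝ (fun ti => J (Function.update θ i ti)) (θ i) ∧
      gradient (fun ti => J (Function.update θ i ti)) (θ i) =
        ∑ s, d θ s •
          ContinuousLinearMap.adjoint (fderiv ℝ (fun ti => μi i ti s) (θ i))
            (gradient (fun ai => Q θ s (Function.update (μ θ s) i ai))
              (μi i (θ i) s)) := by
  intro θ i
  classical
  -- basic rewriting facts
  have hkey : ∀ t s, μ (Function.update θ i t) s = Function.update (μ θ s) i (μi i t s) := by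
    intro t s
    funext j
    rcases eq_or_ne j i with rfl | hj
    · simp [hμ]
    · simp [hμ, Function.update_of_ne hj]
  have hθself : Function.update θ i (θ i) = θ := Function.update_eq_self i θ
  have hμself : ∀ s, Function.update (μ θ s) i (μi i (θ i) s) = μ θ s := by
    intro s
    rw [← hμ θ s i]
    exact Function.update_eq_self i (μ θ s)
  -- differentiability of basic pieces
  have hins : ∀ s (a : EuclideanSpace ℝ (Fin (k i))),
      DifferentiableAt ℝ (fun b => Function.update (μ θ s) i b) a :=
    fun s a => (hasFDerivAt_update (μ θ s) a).differentiableAt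
  have hinθ : ∀ t : EuclideanSpace ℝ (Fin (m i)),
      DifferentiableAt ℝ (fun t' => Function.update θ i t') t :=
    fun t => (hasFDerivAt_update θ t).differentiableAt
  have hμ'd : ∀ s, DifferentiableAt ℝ (fun t => μ (Function.update θ i t) s) (θ i) := by
    intro s
    have hrw : (fun t => μ (Function.update θ i t) s)
        = fun t => Function.update (μ θ s) i (μi i t s) := funext fun t => hkey t s
    rw [hrw]
    exact DifferentiableAt.comp _ (hins s _) (hμ_diff i s (θ i))
  -- differentiability of V
  have hVd : ∀ s, DifferentiableAt ℝ
      (fun t => Q (Function.update θ i t) s (μ (Function.update θ i t) s)) (θ i) := by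
    intro s
    have h2 : DifferentiableAt ℝ
        (fun t => ((Function.update θ i t : ∀ j, EuclideanSpace ℝ (Fin (m j))),
          μ (Function.update θ i t) s)) (θ i) := (hinθ (θ i)).prodMk (hμ'd s)
    have h1 : DifferentiableAt ℝ
        (fun p : (∀ j, EuclideanSpace ℝ (Fin (m j))) × (∀ j, EuclideanSpace ℝ (Fin (k j))) =>
          Q p.1 s p.2)
        ((fun t => ((Function.update θ i t : ∀ j, EuclideanSpace ℝ (Fin (m j))),
          μ (Function.update θ i t) s)) (θ i)) := by
      simpa [hθself] using (hQ_diff s (θ, μ θ s))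
    exact DifferentiableAt.comp (θ i) h1 h2
  -- differentiability of Q θ s in the action
  have hQa : ∀ s (a : ∀ j, EuclideanSpace ℝ (Fin (k j))),
      DifferentiableAt ℝ (fun a' => Q θ s a') a := by
    intro s a
    have h2 : DifferentiableAt ℝ
        (fun a' : ∀ j, EuclideanSpace ℝ (Fin (k j)) =>
          ((θ : ∀ j, EuclideanSpace ℝ (Fin (m j))), a')) a :=
      (differentiableAt_const θ).prodMk differentiableAt_id
    have h3 := DifferentiableAt.comp a (hQ_diff s (θ, a)) h2
    exact h3
  -- differentiability of g s
  have hgd : ∀ s, DifferentiableAt ℝ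
      (fun ai => Q θ s (Function.update (μ θ s) i ai)) (μi i (θ i) s) := by
    intro s
    have h1 : DifferentiableAt ℝ (fun a' => Q θ s a')
        (Function.update (μ θ s) i (μi i (θ i) s)) := by
      rw [hμself s]; exact hQa s (μ θ s)
    exact DifferentiableAt.comp (μi i (θ i) s) h1 (hins s _)
  -- the key pointwise identity
  have hkey2 : ∀ s t, J (Function.update θ i t) =
      Q θ s (Function.update (μ θ s) i (μi i t s)) + J θ
        - Q (Function.update θ i t) s (μ (Function.update θ i t) s)
        + ∑ s', P s (μ (Function.update θ i t) s) s' *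
            (Q (Function.update θ i t) s' (μ (Function.update θ i t) s')
              - Q θ s' (μ θ s')) := by
    intro s t
    have h1 := hPoisson (Function.update θ i t) s (μ (Function.update θ i t) s)
    have h2 := hPoisson θ s (μ (Function.update θ i t) s)
    have h3 : Q θ s (Function.update (μ θ s) i (μi i t s))
        = Q θ s (μ (Function.update θ i t) s) := by rw [hkey]
    have h4 : ∑ s', P s (μ (Function.update θ i t) s) s' *
          (Q (Function.update θ i t) s' (μ (Function.update θ i t) s') - Q θ s' (μ θ s'))
        = (∑ s', P s (μ (Function.update θ i t) s) s' *
            Q (Function.update θ i t) s' (μ (Function.update θ i t) s'))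
          - ∑ s', P s (μ (Function.update θ i t) s) s' * Q θ s' (μ θ s') := by
      rw [← Finset.sum_sub_distrib]
      exact Finset.sum_congr rfl fun _ _ => mul_sub _ _ _
    rw [h3, h4]
    linarith [h1, h2]
  -- names for the relevant derivatives
  set DV : S → (EuclideanSpace ℝ (Fin (m i)) →L[ℝ] ℝ) := fun s =>
    fderiv ℝ (fun t => Q (Function.update θ i t) s (μ (Function.update θ i t) s)) (θ i)
    with hDVdef
  set L1 : S → (EuclideanSpace ℝ (Fin (m i)) →L[ℝ] ℝ) := fun s =>
    ((fderiv ℝ (fun ai => Q θ s (Function.update (μ θ s) i ai)) (μi i (θ i) s)).comp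
      (fderiv ℝ (fun ti => μi i ti s) (θ i))) with hL1def
  have hDV : ∀ s, HasFDerivAt
      (fun t => Q (Function.update θ i t) s (μ (Function.update θ i t) s)) (DV s) (θ i) :=
    fun s => (hVd s).hasFDerivAt
  have hterm1 : ∀ s, HasFDerivAt
      (fun t => Q θ s (Function.update (μ θ s) i (μi i t s))) (L1 s) (θ i) := by
    intro s
    exact HasFDerivAt.comp (θ i) (hgd s).hasFDerivAt
      ((hμ_diff i s) (θ i)).hasFDerivAt
  have hprod : ∀ s s', HasFDerivAt
      (fun t => P s (μ (Function.update θ i t) s) s' *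
        (Q (Function.update θ i t) s' (μ (Function.update θ i t) s') - Q θ s' (μ θ s')))
      (P s (μ θ s) s' • DV s') (θ i) := by
    intro s s'
    have hcd : DifferentiableAt ℝ (fun t => P s (μ (Function.update θ i t) s) s') (θ i) :=
      DifferentiableAt.comp (θ i) ((hP_diff s s') _) (hμ'd s)
    have hc := hcd.hasFDerivAt
    have hd2 := (hDV s').sub_const (Q θ s' (μ θ s'))
    have hm := hc.fun_mul hd2
    simpa [hθself] using hm
  have hFs : ∀ s, HasFDerivAt (fun ti => J (Function.update θ i ti))
      (L1 s - DV s + ∑ s', P s (μ θ s) s' • DV s') (θ i) := by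
    intro s
    have hrw : (fun ti => J (Function.update θ i ti))
        = fun t => (Q θ s (Function.update (μ θ s) i (μi i t s)) + J θ
            - Q (Function.update θ i t) s (μ (Function.update θ i t) s))
          + ∑ s', P s (μ (Function.update θ i t) s) s' *
              (Q (Function.update θ i t) s' (μ (Function.update θ i t) s')
                - Q θ s' (μ θ s')) := funext fun t => hkey2 s t
    rw [hrw]
    exact (((hterm1 s).add_const (J θ)).sub (hDV s)).add
      (HasFDerivAt.fun_sum fun s' _ => hprod s s')
  have hFdiff : DifferentiableAt ℝ (fun ti => J (Function.update θ i ti)) (θ i) :=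
    (hFs (Classical.arbitrary S)).differentiableAt
  refine ⟨hFdiff, ?_⟩
  have hfder : ∀ s, fderiv ℝ (fun ti => J (Function.update θ i ti)) (θ i)
      = L1 s - DV s + ∑ s', P s (μ θ s) s' • DV s' := fun s => (hFs s).fderiv
  have hcancel : ∑ s, d θ s • ∑ s', P s (μ θ s) s' • DV s' = ∑ s, d θ s • DV s := by
    calc ∑ s, d θ s • ∑ s', P s (μ θ s) s' • DV s'
        = ∑ s, ∑ s', (d θ s * P s (μ θ s) s') • DV s' := by
          refine Finset.sum_congr rfl fun s _ => ?_
          rw [Finset.smul_sum]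
          exact Finset.sum_congr rfl fun s' _ => smul_smul _ _ _
      _ = ∑ s', ∑ s, (d θ s * P s (μ θ s) s') • DV s' := Finset.sum_comm
      _ = ∑ s', d θ s' • DV s' := by
          refine Finset.sum_congr rfl fun s' _ => ?_
          rw [← Finset.sum_smul, hd_stat θ s']
  have hmain : fderiv ℝ (fun ti => J (Function.update θ i ti)) (θ i)
      = ∑ s, d θ s • L1 s := by
    have h0 : fderiv ℝ (fun ti => J (Function.update θ i ti)) (θ i)
        = ∑ s, d θ s • fderiv ℝ (fun ti => J (Function.update θ i ti)) (θ i) := by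
      rw [← Finset.sum_smul, hd_sum θ, one_smul]
    calc fderiv ℝ (fun ti => J (Function.update θ i ti)) (θ i)
        = ∑ s, d θ s • (L1 s - DV s + ∑ s', P s (μ θ s) s' • DV s') := by
          rw [h0]; exact Finset.sum_congr rfl fun s _ => by rw [hfder s]
      _ = ((∑ s, d θ s • L1 s) - ∑ s, d θ s • DV s)
            + ∑ s, d θ s • ∑ s', P s (μ θ s) s' • DV s' := by
          rw [← Finset.sum_sub_distrib, ← Finset.sum_add_distrib]
          exact Finset.sum_congr rfl fun s _ => by rw [smul_add, smul_sub]
      _ = ∑ s, d θ s • L1 s := by rw [hcancel]; abel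
  have hgrad : gradient (fun ti => J (Function.update θ i ti)) (θ i)
      = (InnerProductSpace.toDual ℝ _).symm
          (fderiv ℝ (fun ti => J (Function.update θ i ti)) (θ i)) := rfl
  rw [hgrad, hmain, map_sum]
  refine Finset.sum_congr rfl fun s _ => ?_
  simp only [hL1def]
  rw [map_smulₛₗ]
  simp only [starRingEnd_apply, star_trivial]
  rw [toDual_symm_comp_aux]
  rfl
end

section
/- (Deterministic policy gradient as the limit of stochastic policy gradients, average-reward setting: the limit computation) Fix θ ∈ ℝ^m and suppose that, as σ ↓ 0, d(σ)(s) → d(0)(s) and ∇_θ d(σ,θ)(s) → ∇_θ d(0,θ)(s) for every s ∈ S (these are the conclusions of the stationary-distribution continuity lemma). Then lim_{σ↓0} [ Σ_{s∈S} ∇_θ d(σ,θ)(s) ∫_{ℝ^k} ν_σ(μ_θ(s),a) R̄(s,a) da + Σ_{s∈S} d(σ)(s) (D_θ μ_θ(s))ᵀ ∫_{ℝ^k} ν_σ(μ_θ(s),a) ∇_a R̄(s,a) da ] = Σ_{s∈S} ∇_θ d(0,θ)(s) R̄(s,μ_θ(s)) + Σ_{s∈S} d(0)(s) (D_θ μ_θ(s))ᵀ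 (∇_a R̄(s,a)|_{a=μ_θ(s)}). In words, the gradient ∇_θ J_{π_{θ,σ}}(π_{θ,σ}) of the long-run average reward of the stochastic policy π_{θ,σ}(a|s) = ν_σ(μ_θ(s),a) converges, as the variance parameter σ tends to 0, to the deterministic policy gradient ∇_θ J_{μ_θ}(μ_θ). -/
open scoped Topology
open Filter MeasureTheory

private lemma coord_abs_le_norm {k : ℕ} (v : EuclideanSpace ℝ (Fin k)) (i : Fin k) :
    |v i| ≤ ‖v‖ := by
  have h : ‖v i‖ ^ 2 ≤ ∑ j, ‖v j‖ ^ 2 :=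
    Finset.single_le_sum (f := fun j => ‖v j‖ ^ 2) (fun j _ => sq_nonneg _) (Finset.mem_univ i)
  calc |v i| = Real.sqrt (‖v i‖ ^ 2) := by
        rw [Real.sqrt_sq (norm_nonneg _), Real.norm_eq_abs]
    _ ≤ Real.sqrt (∑ j, ‖v j‖ ^ 2) := Real.sqrt_le_sqrt h
    _ = ‖v‖ := (EuclideanSpace.norm_eq v).symm

private lemma key_scalar {k : ℕ}
    (ν : ℝ → EuclideanSpace ℝ (Fin k) → EuclideanSpace ℝ (Fin k) → ℝ)
    (hν_unif : ∀ L : NNReal, ∀ b : ℝ, 0 < b → ∀ ε : ℝ, 0 < ε → ∃ δ > (0:ℝ),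
      ∀ σ, 0 < σ → σ < δ → ∀ f : EuclideanSpace ℝ (Fin k) → ℝ,
        LipschitzWith L f → (∀ a, |f a| ≤ b) → ∀ a',
          |(∫ a, ν σ a' a * f a) - f a'| ≤ ε)
    {f : EuclideanSpace ℝ (Fin k) → ℝ} {L : NNReal} {b : ℝ} (hb : 0 < b)
    (hLip : LipschitzWith L f) (hbd : ∀ a, |f a| ≤ b) (a' : EuclideanSpace ℝ (Fin k)) :
    Tendsto (fun σ => ∫ a, ν σ a' a * f a) (𝓝[>] (0:ℝ)) (𝓝 (f a')) := by
  rw [Metric.tendsto_nhds]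
  intro ε hε
  obtain ⟨δ, hδ, h⟩ := hν_unif L b hb (ε/2) (by positivity)
  filter_upwards [Ioo_mem_nhdsGT_of_mem (Set.mem_Ico.2 ⟨le_refl 0, hδ⟩)] with σ hσ
  have hh := h σ hσ.1 hσ.2 f hLip hbd a'
  rw [Real.dist_eq]
  linarith [half_lt_self hε]

private lemma key_vector {k : ℕ}
    (ν : ℝ → EuclideanSpace ℝ (Fin k) → EuclideanSpace ℝ (Fin k) → ℝ)
    (hν_meas : ∀ σ a', Measurable (ν σ a'))
    (hν_int : ∀ σ, 0 < σ → ∀ a', ∫ a, ν σ a' a = 1)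
    (hν_unif : ∀ L : NNReal, ∀ b : ℝ, 0 < b → ∀ ε : ℝ, 0 < ε → ∃ δ > (0:ℝ),
      ∀ σ, 0 < σ → σ < δ → ∀ f : EuclideanSpace ℝ (Fin k) → ℝ,
        LipschitzWith L f → (∀ a, |f a| ≤ b) → ∀ a',
          |(∫ a, ν σ a' a * f a) - f a'| ≤ ε)
    {g : EuclideanSpace ℝ (Fin k) → EuclideanSpace ℝ (Fin k)} {L : NNReal} {b : ℝ}
    (hLip : LipschitzWith L g) (hbd : ∀ a, ‖g a‖ ≤ b) (a' : EuclideanSpace ℝ (Fin k)) :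
    Tendsto (fun σ => ∫ a, ν σ a' a • g a) (𝓝[>] (0:ℝ)) (𝓝 (g a')) := by
  set b' : ℝ := max b 1 with hb'def
  have hb' : (0:ℝ) < b' := lt_of_lt_of_le one_pos (le_max_right _ _)
  have hbd' : ∀ a, ‖g a‖ ≤ b' := fun a => (hbd a).trans (le_max_left _ _)
  rw [Metric.tendsto_nhds]
  intro ε hε
  set ε' : ℝ := ε / (Real.sqrt k + 1) with hε'def
  have hsk : (0:ℝ) ≤ Real.sqrt k := Real.sqrt_nonneg _
  have hε' : 0 < ε' := by positivity
  obtain ⟨δ, hδ, h⟩ := hν_unif L b' hb' ε' hε'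
  filter_upwards [Ioo_mem_nhdsGT_of_mem (Set.mem_Ico.2 ⟨le_refl 0, hδ⟩)] with σ hσ
  -- integrability facts
  have hint : Integrable (ν σ a') := integrable_of_integral_eq_one (hν_int σ hσ.1 a')
  have hg_cont : Continuous g := hLip.continuous
  have hg_mem : MemLp g ⊤ (volume) :=
    memLp_top_of_bound hg_cont.aestronglyMeasurable b' (Filter.Eventually.of_forall hbd')
  have hint2 : Integrable (fun a => ν σ a' a • g a) := by
    have := hint.smul_of_top_left (f := g) hg_mem
    exact this
  -- coordinatewise identity
  have hcoord : ∀ i : Fin k,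
      (∫ a, ν σ a' a • g a) i = ∫ a, ν σ a' a * g a i := by
    intro i
    have := (EuclideanSpace.proj (𝕜 := ℝ) i).integral_comp_comm hint2
    simpa [smul_eq_mul] using this.symm
  -- coordinatewise bound
  have hcb : ∀ i : Fin k, |(∫ a, ν σ a' a • g a) i - g a' i| ≤ ε' := by
    intro i
    have hLi : LipschitzWith L (fun a => g a i) := by
      apply LipschitzWith.of_dist_le_mul
      intro x y
      have h1 : dist (g x i) (g y i) = |(g x - g y) i| := by
        rw [Real.dist_eq]; norm_num [PiLp.sub_apply]
      calc dist (g x i) (g y i) = |(g x - g y) i| := h1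
        _ ≤ ‖g x - g y‖ := coord_abs_le_norm _ _
        _ = dist (g x) (g y) := (dist_eq_norm _ _).symm
        _ ≤ L * dist x y := hLip.dist_le_mul x y
    have hbdi : ∀ a, |g a i| ≤ b' := fun a => (coord_abs_le_norm _ _).trans (hbd' a)
    have := h σ hσ.1 hσ.2 (fun a => g a i) hLi hbdi a'
    rw [hcoord i]; exact this
  -- norm bound
  rw [dist_eq_norm]
  have hnorm : ‖(∫ a, ν σ a' a • g a) - g a'‖ ≤ Real.sqrt k * ε' := by
    rw [EuclideanSpace.norm_eq]
    have hsum : ∑ i, ‖((∫ a, ν σ a' a • g a) - g a') i‖ ^ 2 ≤ (k : ℝ) * ε' ^ 2 := by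
      calc ∑ i, ‖((∫ a, ν σ a' a • g a) - g a') i‖ ^ 2
          ≤ ∑ _i : Fin k, ε' ^ 2 := by
            apply Finset.sum_le_sum
            intro i _
            have : ‖((∫ a, ν σ a' a • g a) - g a') i‖ ≤ ε' := by
              rw [Real.norm_eq_abs]
              simpa [PiLp.sub_apply] using hcb i
            exact pow_le_pow_left₀ (norm_nonneg _) this 2
        _ = (k : ℝ) * ε' ^ 2 := by simp [Finset.sum_const, mul_comm]
    calc Real.sqrt (∑ i, ‖((∫ a, ν σ a' a • g a) - g a') i‖ ^ 2)
        ≤ Real.sqrt ((k : ℝ) * ε' ^ 2) := Real.sqrt_le_sqrt hsum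
      _ = Real.sqrt k * ε' := by
          rw [Real.sqrt_mul (Nat.cast_nonneg k), Real.sqrt_sq hε'.le]
  have hlt : Real.sqrt k * ε' < ε := by
    rw [hε'def]
    have h1 : Real.sqrt k / (Real.sqrt k + 1) < 1 := (div_lt_one (by positivity)).2 (by linarith)
    calc Real.sqrt k * (ε / (Real.sqrt k + 1)) = ε * (Real.sqrt k / (Real.sqrt k + 1)) := by ring
      _ < ε * 1 := mul_lt_mul_of_pos_left h1 hε
      _ = ε := mul_one ε
  linarith


/-- **Deterministic policy gradient as the limit of stochastic policy gradients**
(average-reward setting; the limit computation). With `π_{θ,σ}(a|s) = ν_σ(μ_θ(s),a)`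
a regular delta-approximation of the deterministic policy `μ_θ`, and given the
convergence of the stationary distributions `d(σ)(s) → d(0)(s)` and of their
θ-gradients `∇_θ d(σ,θ)(s) → ∇_θ d(0,θ)(s)` as `σ ↓ 0`, the stochastic policy
gradient expression converges to the deterministic policy gradient:
`lim_{σ↓0} [ ∑_s ∇_θ d(σ,θ)(s) ∫ ν_σ(μ_θ(s),a) R̄(s,a) da
           + ∑_s d(σ)(s) (D_θ μ_θ(s))ᵀ ∫ ν_σ(μ_θ(s),a) ∇_a R̄(s,a) da ]
 = ∑_s ∇_θ d(0,θ)(s) R̄(s,μ_θ(s))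
   + ∑_s d(0)(s) (D_θ μ_θ(s))ᵀ (∇_a R̄(s,a)|_{a=μ_θ(s)})`. -/
theorem stmt_3
    {S : Type*} [Fintype S] [Nonempty S] {m k : ℕ}
    (θ : EuclideanSpace ℝ (Fin m))
    (μ : EuclideanSpace ℝ (Fin m) → S → EuclideanSpace ℝ (Fin k))
    (hμ_diff : ∀ s, Differentiable ℝ (fun θ' => μ θ' s))
    (R : S → EuclideanSpace ℝ (Fin k) → ℝ)
    (hR_bdd : ∀ s, ∃ b : ℝ, ∀ a, |R s a| ≤ b)
    (hR_lip : ∀ s, ∃ L : NNReal, LipschitzWith L (R s))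
    (hgradR_bdd : ∀ s, ∃ b : ℝ, ∀ a, ‖gradient (R s) a‖ ≤ b)
    (hgradR_lip : ∀ s, ∃ L : NNReal, LipschitzWith L (fun a => gradient (R s) a))
    -- the family of regular delta-approximations
    (ν : ℝ → EuclideanSpace ℝ (Fin k) → EuclideanSpace ℝ (Fin k) → ℝ)
    (hν_meas : ∀ σ a', Measurable (ν σ a'))
    (hν_nonneg : ∀ σ, 0 < σ → ∀ a' a, 0 ≤ ν σ a' a)
    (hν_int : ∀ σ, 0 < σ → ∀ a', ∫ a, ν σ a' a = 1)
    (hν_supp : ∀ σ, 0 < σ → ∀ a',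
      ∃ C : Set (EuclideanSpace ℝ (Fin k)), IsCompact C ∧ Function.support (ν σ a') ⊆ C)
    (hν_unif : ∀ L : NNReal, ∀ b : ℝ, 0 < b → ∀ ε : ℝ, 0 < ε → ∃ δ > (0:ℝ),
      ∀ σ, 0 < σ → σ < δ → ∀ f : EuclideanSpace ℝ (Fin k) → ℝ,
        LipschitzWith L f → (∀ a, |f a| ≤ b) → ∀ a',
          |(∫ a, ν σ a' a * f a) - f a'| ≤ ε)
    -- stationary distributions (at the fixed `θ`) and their θ-gradients
    (d : ℝ → S → ℝ)
    (hd_nonneg : ∀ σ, 0 ≤ σ → ∀ s, 0 ≤ d σ s)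
    (hd_sum : ∀ σ, 0 ≤ σ → ∑ s, d σ s = 1)
    (hd_conv : ∀ s, Tendsto (fun σ => d σ s) (𝓝[>] (0:ℝ)) (𝓝 (d 0 s)))
    (Dd : ℝ → S → EuclideanSpace ℝ (Fin m))
    (hDd_conv : ∀ s, Tendsto (fun σ => Dd σ s) (𝓝[>] (0:ℝ)) (𝓝 (Dd 0 s))) :
    Tendsto
      (fun σ =>
        (∑ s, (∫ a, ν σ (μ θ s) a * R s a) • Dd σ s) +
        ∑ s, d σ s •
          ContinuousLinearMap.adjoint (fderiv ℝ (fun θ' => μ θ' s) θ)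
            (∫ a, ν σ (μ θ s) a • gradient (R s) a))
      (𝓝[>] (0:ℝ))
      (𝓝 ((∑ s, R s (μ θ s) • Dd 0 s) +
        ∑ s, d 0 s •
          ContinuousLinearMap.adjoint (fderiv ℝ (fun θ' => μ θ' s) θ)
            (gradient (R s) (μ θ s)))) := by
  apply Tendsto.add
  · apply tendsto_finset_sum
    intro s _
    obtain ⟨b, hb⟩ := hR_bdd s
    obtain ⟨L, hL⟩ := hR_lip s
    have hb' : ∀ a, |R s a| ≤ max b 1 := fun a => (hb a).trans (le_max_left _ _)
    exact (key_scalar ν hν_unif (lt_of_lt_of_le one_pos (le_max_right b 1)) hL hb'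
      (μ θ s)).smul (hDd_conv s)
  · apply tendsto_finset_sum
    intro s _
    obtain ⟨b, hb⟩ := hgradR_bdd s
    obtain ⟨L, hL⟩ := hgradR_lip s
    have hvec := key_vector ν hν_meas hν_int hν_unif hL hb (μ θ s)
    exact (hd_conv s).smul
      (((ContinuousLinearMap.adjoint (fderiv ℝ (fun θ' => μ θ' s) θ)).continuous.tendsto
        _).comp hvec)
end

section
/- (Uniform primitivity near σ = 0 over a compact parameter set) Let S be a finite nonempty type, Θ a compact topological space, and p : Θ × [0,∞) → Matrix S S ℝ a map continuous in (θ,σ) (entrywise), such that every matrix p(θ,σ) has nonnegative entries and each of its rows sums to 1, and such that for each θ ∈ Θ there exists n ≥ 1 for which all entries of the matrix power p(θ,0)^n are strictly positive (i.e. p(θ,0) is irreducible and aperiodic). Then there exist r > 0 and n* ≥ 1 such that for all θ ∈ Θ and all σ ∈ [0,r], all entries of p(θ,σ)^{n*} are strictly positive. -/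
open Topology

lemma my_pow_pos_mono {S : Type*} [Fintype S] [DecidableEq S] [Nonempty S] (P : Matrix S S ℝ)
    (hnn : ∀ s s', 0 ≤ P s s') (hrow : ∀ s, ∑ s', P s s' = 1)
    {n m : ℕ} (hnm : n ≤ m) (h : ∀ s s', 0 < (P ^ n) s s') :
    ∀ s s', 0 < (P ^ m) s s' := by
  induction m with
  | zero => obtain rfl : n = 0 := Nat.le_zero.mp hnm; exact h
  | succ m ih =>
    rcases Nat.lt_or_ge n (m+1) with hlt | hge
    · have hm : ∀ s s', 0 < (P ^ m) s s' := ih (Nat.lt_succ_iff.mp hlt)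
      intro s s'
      rw [pow_succ', Matrix.mul_apply]
      have hex : ∃ k, 0 < P s k := by
        by_contra hc
        push_neg at hc
        have hz : ∀ k, P s k = 0 := fun k => le_antisymm (hc k) (hnn s k)
        have h1 : (1:ℝ) = 0 := by
          rw [← hrow s]
          exact Finset.sum_eq_zero (fun k _ => hz k)
        linarith
      obtain ⟨k, hk⟩ := hex
      have : 0 < P s k * (P ^ m) k s' := mul_pos hk (hm k s')
      refine lt_of_lt_of_le this ?_
      exact Finset.single_le_sum (fun i _ => mul_nonneg (hnn s i) (le_of_lt (hm i s'))) (Finset.mem_univ k)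
    · obtain rfl : n = m + 1 := le_antisymm hnm hge
      exact h

lemma my_contpow {S : Type*} [Fintype S] [DecidableEq S]
    {Θ : Type*} [TopologicalSpace Θ]
    (p : Θ → ℝ → Matrix S S ℝ)
    (hcont : ∀ s s', ContinuousOn (fun q : Θ × ℝ => p q.1 q.2 s s')
      (Set.univ ×ˢ Set.Ici (0:ℝ))) (n : ℕ) (s s' : S) :
    ContinuousOn (fun q : Θ × ℝ => ((p q.1 q.2) ^ n) s s') (Set.univ ×ˢ Set.Ici (0:ℝ)) := by
  induction n generalizing s s' with
  | zero => simp only [pow_zero, Matrix.one_apply]; exact continuousOn_const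
  | succ n ih =>
    simp only [pow_succ, Matrix.mul_apply]
    exact continuousOn_finset_sum Finset.univ (fun k _ => (ih s k).mul (hcont k s'))

/-- **Uniform primitivity near `σ = 0` over a compact parameter set.**
`S` finite nonempty, `Θ` compact, `p(θ,σ)` row-stochastic matrices depending continuously
on `(θ,σ) ∈ Θ × [0,∞)` entrywise, with each `p(θ,0)` primitive (some power has all entries
positive). Then there are `r > 0` and `n* ≥ 1` such that for all `θ` and all `σ ∈ [0,r]`,
all entries of `p(θ,σ)^{n*}` are strictly positive. -/
theorem stmt_5
    {S : Type*} [Fintype S] [Nonempty S] [DecidableEq S]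
    {Θ : Type*} [TopologicalSpace Θ] [CompactSpace Θ]
    (p : Θ → ℝ → Matrix S S ℝ)
    (hcont : ∀ s s', ContinuousOn (fun q : Θ × ℝ => p q.1 q.2 s s')
      (Set.univ ×ˢ Set.Ici (0:ℝ)))
    (hnonneg : ∀ θ σ, 0 ≤ σ → ∀ s s', 0 ≤ p θ σ s s')
    (hrow : ∀ θ σ, 0 ≤ σ → ∀ s, ∑ s', p θ σ s s' = 1)
    (hprim : ∀ θ, ∃ n : ℕ, 1 ≤ n ∧ ∀ s s', 0 < ((p θ 0) ^ n) s s') :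
    ∃ r > (0:ℝ), ∃ nstar : ℕ, 1 ≤ nstar ∧
      ∀ θ, ∀ σ ∈ Set.Icc (0:ℝ) r, ∀ s s', 0 < ((p θ σ) ^ nstar) s s' := by
  classical
  cases isEmpty_or_nonempty Θ with
  | inl hE => exact ⟨1, one_pos, 1, le_refl 1, fun θ => (IsEmpty.false θ).elim⟩
  | inr hNE =>
  -- choose data for each θ
  have hloc : ∀ θ : Θ, ∃ n : ℕ, 1 ≤ n ∧ ∃ U ∈ 𝓝 θ, ∃ ε > (0:ℝ),
      ∀ θ' ∈ U, ∀ σ ∈ Set.Icc (0:ℝ) ε, ∀ s s', 0 < ((p θ' σ) ^ n) s s' := by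
    intro θ
    obtain ⟨n, hn1, hnp⟩ := hprim θ
    refine ⟨n, hn1, ?_⟩
    have hmem : ((θ, (0:ℝ)) : Θ × ℝ) ∈ Set.univ ×ˢ Set.Ici (0:ℝ) := by
      simp
    have hev : ∀ᶠ q in 𝓝[Set.univ ×ˢ Set.Ici (0:ℝ)] ((θ, (0:ℝ)) : Θ × ℝ),
        ∀ s s', 0 < ((p q.1 q.2) ^ n) s s' := by
      rw [Filter.eventually_all]
      intro s
      rw [Filter.eventually_all]
      intro s'
      exact (my_contpow p hcont n s s' (θ, 0) hmem).eventually (lt_mem_nhds (hnp s s'))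
    rw [nhdsWithin_prod_eq, nhdsWithin_univ] at hev
    rw [Filter.eventually_iff, Filter.mem_prod_iff] at hev
    obtain ⟨U, hU, W, hW, hUW⟩ := hev
    obtain ⟨ε, hε, hIcc⟩ := (mem_nhdsGE_iff_exists_Icc_subset).mp hW
    refine ⟨U, hU, ε, hε, fun θ' hθ' σ hσ s s' => ?_⟩
    exact hUW (Set.mk_mem_prod hθ' (hIcc hσ)) s s'
  choose n hn1 U hU ε hε hpos using hloc
  obtain ⟨t, ht⟩ := isCompact_univ.elim_nhds_subcover U (fun x _ => hU x)
  obtain ⟨θ₀⟩ := hNE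
  have hθ₀ : ∃ θ' ∈ t, θ₀ ∈ U θ' := by
    have := ht.2 (Set.mem_univ θ₀)
    simpa using this
  obtain ⟨θ', hθ't, _⟩ := hθ₀
  have htne : t.Nonempty := ⟨θ', hθ't⟩
  refine ⟨t.inf' htne ε, ?_, t.sup n, ?_, ?_⟩
  · exact (Finset.lt_inf'_iff htne).mpr (fun b hb => hε b)
  · exact le_trans (hn1 θ') (Finset.le_sup hθ't)
  · intro θ σ hσ s s'
    have := ht.2 (Set.mem_univ θ)
    simp only [Set.mem_iUnion] at this
    obtain ⟨θ₁, hθ₁t, hθU⟩ := this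
    have hσ' : σ ∈ Set.Icc (0:ℝ) (ε θ₁) :=
      ⟨hσ.1, le_trans hσ.2 (Finset.inf'_le ε hθ₁t)⟩
    exact my_pow_pos_mono (p θ σ) (hnonneg θ σ hσ.1) (hrow θ σ hσ.1)
      (Finset.le_sup hθ₁t) (hpos θ₁ θ hθU σ hσ') s s'
end

section
/- (Compatible function approximation gives an unbiased deterministic policy gradient) Let S be a finite nonempty set, d : S → ℝ a probability distribution on S (d(s) ≥ 0, Σ_s d(s) = 1), φ : S → ℝ^{m×k} a matrix-valued feature map (φ(s) plays the role of D_θ μ_θ(s)ᵀ viewed as an m×k matrix), and g : S → ℝ^k (playing the role of ∇_a Q_θ(s,a)|_{a=μ_θ(s)}). Define the mean squared error MSE(ω) = Σ_{s∈S} d(s) ‖φ(s)ᵀ ω − g(s)‖² for ω ∈ ℝ^m. If ω* is a global minimizer of MSE, then Σ_{s∈S} d(s) φ(s) (φ(s)ᵀ ω*) = Σ_{s∈S} d(s) φ(s) g(s); that is, the policy gradient computed with the compatible linear approximation whose action-gradient is φ(s)ᵀω* coincides exactly with the policy gradient computed with the true action-gradient g. -/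
open Matrix

/-- **Compatible function approximation gives an unbiased deterministic policy
gradient.** If `ω*` globally minimizes `MSE(ω) = ∑_s d(s) ‖φ(s)ᵀω − g(s)‖²`, then
`∑_s d(s) φ(s)(φ(s)ᵀω*) = ∑_s d(s) φ(s) g(s)`: the policy gradient computed with the
compatible linear approximation coincides with the one computed with the true
action-gradient `g`. -/
theorem stmt_11
    {S : Type*} [Fintype S] [Nonempty S] {m k : ℕ}
    (d : S → ℝ)
    (hd_nonneg : ∀ s, 0 ≤ d s)
    (hd_sum : ∑ s, d s = 1)
    (φ : S → Matrix (Fin m) (Fin k) ℝ)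
    (g : S → Fin k → ℝ)
    (MSE : (Fin m → ℝ) → ℝ)
    (hMSE : ∀ ω, MSE ω = ∑ s, d s * ∑ i, ((φ s)ᵀ.mulVec ω i - g s i) ^ 2)
    (ωstar : Fin m → ℝ)
    (hmin : ∀ ω, MSE ωstar ≤ MSE ω) :
    ∑ s, d s • (φ s).mulVec ((φ s)ᵀ.mulVec ωstar) = ∑ s, d s • (φ s).mulVec (g s) := by
  classical
  set r : S → Fin k → ℝ := fun s i => (φ s)ᵀ.mulVec ωstar i - g s i with hr
  set G : Fin m → ℝ := fun j => ∑ s, d s * (φ s).mulVec (r s) j with hG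
  have key : ∀ v : Fin m → ℝ,
      ∑ j, v j * G j = ∑ s, d s * ∑ i, r s i * (φ s)ᵀ.mulVec v i := by
    intro v
    simp only [hG, Finset.mul_sum, Finset.sum_mul]
    rw [Finset.sum_comm]
    refine Finset.sum_congr rfl fun s _ => ?_
    simp only [Matrix.mulVec, dotProduct, Matrix.transpose_apply, Finset.mul_sum,
      Finset.sum_mul]
    rw [Finset.sum_comm]
    refine Finset.sum_congr rfl fun i _ => Finset.sum_congr rfl fun j _ => by ring
  have expand : ∀ (v : Fin m → ℝ) (t : ℝ),
      MSE (ωstar + t • v) = MSE ωstar + 2 * t * (∑ j, v j * G j)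
        + t ^ 2 * ∑ s, d s * ∑ i, ((φ s)ᵀ.mulVec v i) ^ 2 := by
    intro v t
    rw [key, hMSE, hMSE]
    have hs : ∀ s : S,
        d s * ∑ i, ((φ s)ᵀ.mulVec (ωstar + t • v) i - g s i) ^ 2
          = d s * ∑ i, (r s i) ^ 2
            + 2 * t * (d s * ∑ i, r s i * (φ s)ᵀ.mulVec v i)
            + t ^ 2 * (d s * ∑ i, ((φ s)ᵀ.mulVec v i) ^ 2) := by
      intro s
      have h1 : ∑ i, ((φ s)ᵀ.mulVec (ωstar + t • v) i - g s i) ^ 2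
          = ∑ i, ((r s i) ^ 2 + 2 * t * (r s i * (φ s)ᵀ.mulVec v i)
              + t ^ 2 * ((φ s)ᵀ.mulVec v i) ^ 2) := by
        refine Finset.sum_congr rfl fun i _ => ?_
        simp only [Matrix.mulVec_add, Matrix.mulVec_smul, Pi.add_apply, Pi.smul_apply,
          smul_eq_mul, hr]
        ring
      rw [h1, Finset.sum_add_distrib, Finset.sum_add_distrib, ← Finset.mul_sum,
        ← Finset.mul_sum]
      ring
    calc ∑ s, d s * ∑ i, ((φ s)ᵀ.mulVec (ωstar + t • v) i - g s i) ^ 2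
        = ∑ s, (d s * ∑ i, (r s i) ^ 2
            + 2 * t * (d s * ∑ i, r s i * (φ s)ᵀ.mulVec v i)
            + t ^ 2 * (d s * ∑ i, ((φ s)ᵀ.mulVec v i) ^ 2)) :=
          Finset.sum_congr rfl fun s _ => hs s
      _ = _ := by
          rw [Finset.sum_add_distrib, Finset.sum_add_distrib, ← Finset.mul_sum,
            ← Finset.mul_sum]
  -- apply minimality with v = G and a suitable t
  set B : ℝ := ∑ j, G j * G j with hB
  set C : ℝ := ∑ s, d s * ∑ i, ((φ s)ᵀ.mulVec G i) ^ 2 with hC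
  have hBnn : 0 ≤ B := Finset.sum_nonneg fun j _ => mul_self_nonneg _
  have hCnn : 0 ≤ C := Finset.sum_nonneg fun s _ =>
    mul_nonneg (hd_nonneg s) (Finset.sum_nonneg fun i _ => sq_nonneg _)
  have hC1 : (0:ℝ) < C + 1 := by linarith
  have hineq : 0 ≤ 2 * (-B / (C + 1)) * B + (-B / (C + 1)) ^ 2 * C := by
    have h := hmin (ωstar + (-B / (C + 1)) • G)
    rw [expand G (-B / (C + 1)), ← hB, ← hC] at h
    linarith
  have hB0 : B = 0 := by
    have hkey : 2 * (-B / (C + 1)) * B + (-B / (C + 1)) ^ 2 * C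
        = -B ^ 2 * (C + 2) / (C + 1) ^ 2 := by
      field_simp
      ring
    rw [hkey] at hineq
    have hp : (0:ℝ) < (C + 1) ^ 2 := by positivity
    have h2 := (le_div_iff₀ hp).mp hineq
    have hBle : B ≤ 0 := by nlinarith
    linarith
  have hGzero : ∀ j, G j = 0 := by
    intro j
    have := (Finset.sum_eq_zero_iff_of_nonneg
      (fun j _ => mul_self_nonneg (G j))).mp hB0 j (Finset.mem_univ j)
    nlinarith [this]
  have hGv : (∑ s, d s • (φ s).mulVec (r s)) = 0 := by
    funext j
    have := hGzero j
    simpa [Finset.sum_apply, Pi.smul_apply, smul_eq_mul, hG] using this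
  have hsplit : ∑ s, d s • (φ s).mulVec ((φ s)ᵀ.mulVec ωstar)
      - ∑ s, d s • (φ s).mulVec (g s) = ∑ s, d s • (φ s).mulVec (r s) := by
    rw [← Finset.sum_sub_distrib]
    refine Finset.sum_congr rfl fun s _ => ?_
    rw [← smul_sub, ← Matrix.mulVec_sub]
    rfl
  have := hsplit.trans hGv
  exact sub_eq_zero.mp this
end

section
/- (Differentiation of a smoothed objective through a translation-invariant kernel) Let φ : ℝ^k → ℝ be continuously differentiable with compact support, and define the translation-invariant kernel ν(a', a) = φ(a − a'). Let f : ℝ^k → ℝ be continuously differentiable with f and ∇f bounded, and let μ : ℝ^m → ℝ^k be differentiable at θ. Then the map θ' ↦ ∫_{ℝ^k} ν(μ(θ'), a) f(a) da is differentiable at θ and its gradient equals (D_θ μ(θ))ᵀ ∫_{ℝ^k} ν(μ(θ), a) ∇_a f(a) da. (This combines the chain rule, the identity ∇_{a'}ν = −∇_a ν for translation-invariant kernels, and integration by parts against the compactly supported kernel.) -/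
open MeasureTheory
open scoped Topology

set_option maxHeartbeats 1000000 in
set_option synthInstance.maxHeartbeats 400000 in
/-- **Differentiation of a smoothed objective through a translation-invariant kernel.**
With `ν(a',a) = φ(a − a')` for `φ` continuously differentiable with compact support,
`f` continuously differentiable with `f` and `∇f` bounded, and `μ` differentiable at `θ`,
the map `θ' ↦ ∫ ν(μ(θ'),a) f(a) da` is differentiable at `θ` with gradient
`(D_θ μ(θ))ᵀ ∫ ν(μ(θ),a) ∇_a f(a) da`. -/
theorem stmt_13
    {m k : ℕ}
    (φ : EuclideanSpace ℝ (Fin k) → ℝ)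
    (hφ_smooth : ContDiff ℝ 1 φ)
    (hφ_supp : HasCompactSupport φ)
    (ν : EuclideanSpace ℝ (Fin k) → EuclideanSpace ℝ (Fin k) → ℝ)
    (hν : ∀ a' a, ν a' a = φ (a - a'))
    (f : EuclideanSpace ℝ (Fin k) → ℝ)
    (hf_smooth : ContDiff ℝ 1 f)
    (hf_bdd : ∃ b : ℝ, ∀ a, |f a| ≤ b)
    (hgradf_bdd : ∃ b : ℝ, ∀ a, ‖gradient f a‖ ≤ b)
    (μ : EuclideanSpace ℝ (Fin m) → EuclideanSpace ℝ (Fin k))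
    (θ : EuclideanSpace ℝ (Fin m))
    (hμ_diff : DifferentiableAt ℝ μ θ) :
    DifferentiableAt ℝ (fun θ' => ∫ a, ν (μ θ') a * f a) θ ∧
    gradient (fun θ' => ∫ a, ν (μ θ') a * f a) θ =
      ContinuousLinearMap.adjoint (fderiv ℝ μ θ)
        (∫ a, ν (μ θ) a • gradient f a) := by
  classical
  obtain ⟨b, hb⟩ := hgradf_bdd
  have hfc : Continuous f := hf_smooth.continuous
  have hφc : Continuous φ := hφ_smooth.continuous
  have hfd : Differentiable ℝ f := hf_smooth.differentiable one_ne_zero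
  have hf'c : Continuous (fderiv ℝ f) := hf_smooth.continuous_fderiv one_ne_zero
  have hgradc : Continuous (gradient f) := by
    have : gradient f = fun a => (InnerProductSpace.toDual ℝ _).symm (fderiv ℝ f a) := rfl
    rw [this]
    exact (InnerProductSpace.toDual ℝ _).symm.continuous.comp hf'c
  have hnorm_fd : ∀ y, ‖fderiv ℝ f y‖ ≤ b := by
    intro y
    have := hb y
    rwa [gradient, LinearIsometryEquiv.norm_map] at this
  have hφ_int : Integrable φ := hφc.integrable_of_hasCompactSupport hφ_supp
  -- translation change of variables
  have hGeq : ∀ x : EuclideanSpace ℝ (Fin k),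
      (∫ a, φ (a - x) * f a) = ∫ s, φ s • f (x + s) := by
    intro x
    refine ((integral_add_right_eq_self (fun a => φ (a - x) * f a) x).symm).trans ?_
    congr 1
    funext a
    simp [add_sub_cancel_right, add_comm x a, smul_eq_mul]
  -- derivative of the smoothed function
  have hG : ∀ x : EuclideanSpace ℝ (Fin k),
      HasFDerivAt (fun x => ∫ s, φ s • f (x + s))
        (∫ s, φ s • fderiv ℝ f (x + s)) x := by
    intro x
    refine hasFDerivAt_integral_of_dominated_of_fderiv_le (𝕜 := ℝ)
      (F := fun x s => φ s • f (x + s))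
      (F' := fun x s => φ s • fderiv ℝ f (x + s))
      (bound := fun s => ‖φ s‖ * b) (s := Set.univ) Filter.univ_mem ?_ ?_ ?_ ?_ ?_ ?_
    · filter_upwards with y
      exact ((hφc.smul (hfc.comp (continuous_const.add continuous_id))).aestronglyMeasurable)
    · have hcs : HasCompactSupport (fun s => φ s • f (x + s)) := hφ_supp.smul_right
      exact (hφc.smul (hfc.comp (continuous_const.add continuous_id))).integrable_of_hasCompactSupport hcs
    · exact ((hφc.smul (hf'c.comp (continuous_const.add continuous_id))).aestronglyMeasurable)
    · filter_upwards with s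
      intro y hy
      exact (norm_smul_le _ _).trans
        (mul_le_mul_of_nonneg_left (hnorm_fd (y + s)) (norm_nonneg _))
    · exact hφ_int.norm.mul_const b
    · filter_upwards with s
      intro y hy
      have h1 : HasFDerivAt (fun y => f (y + s)) (fderiv ℝ f (y + s)) y := by
        have := ((hfd (y + s)).hasFDerivAt).comp y ((hasFDerivAt_id y).add_const s)
        simp at this
        exact this
      exact h1.const_smul (φ s)
  -- the main function in convolution form
  have hfun : (fun θ' => ∫ a, ν (μ θ') a * f a)
      = fun θ' => ∫ s, φ s • f (μ θ' + s) := by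
    funext θ'
    simp only [hν]
    exact hGeq (μ θ')
  rw [hfun]
  have hcomp : HasFDerivAt (fun θ' => ∫ s, φ s • f (μ θ' + s))
      ((∫ s, φ s • fderiv ℝ f (μ θ + s)).comp (fderiv ℝ μ θ)) θ :=
    (hG (μ θ)).comp θ hμ_diff.hasFDerivAt
  refine ⟨hcomp.differentiableAt, ?_⟩
  set A := fderiv ℝ μ θ with hA
  -- integrability facts
  have hD_int : Integrable (fun s => φ s • fderiv ℝ f (μ θ + s)) := by
    have hcs : HasCompactSupport (fun s => φ s • fderiv ℝ f (μ θ + s)) := hφ_supp.smul_right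
    exact (hφc.smul (hf'c.comp (continuous_const.add continuous_id))).integrable_of_hasCompactSupport hcs
  have hw_int : Integrable (fun a => ν (μ θ) a • gradient f a) := by
    have h1 : (fun a => ν (μ θ) a • gradient f a)
        = fun a => φ (a - μ θ) • gradient f a := by funext a; rw [hν]
    rw [h1]
    have hcs : HasCompactSupport (fun a : EuclideanSpace ℝ (Fin k) => φ (a - μ θ)) :=
      hφ_supp.comp_homeomorph (Homeomorph.subRight (μ θ))
    exact ((hφc.comp (continuous_id.sub continuous_const)).smul hgradc).integrable_of_hasCompactSupport
      hcs.smul_right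
  have hkey : fderiv ℝ (fun θ' => ∫ s, φ s • f (μ θ' + s)) θ
      = InnerProductSpace.toDual ℝ (EuclideanSpace ℝ (Fin m))
          (ContinuousLinearMap.adjoint A (∫ a, ν (μ θ) a • gradient f a)) := by
    rw [hcomp.fderiv]
    ext v
    rw [ContinuousLinearMap.comp_apply, ContinuousLinearMap.integral_apply hD_int,
      InnerProductSpace.toDual_apply_apply, ContinuousLinearMap.adjoint_inner_left,
      real_inner_comm, ← integral_inner hw_int]
    have hright : ∀ a, (inner ℝ (A v) (ν (μ θ) a • gradient f a) : ℝ)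
        = φ (a - μ θ) * fderiv ℝ f a (A v) := by
      intro a
      rw [hν, real_inner_smul_right, real_inner_comm]
      congr 1
      exact InnerProductSpace.toDual_symm_apply
    simp_rw [hright]
    -- translate back
    rw [← integral_add_right_eq_self (fun a => φ (a - μ θ) * fderiv ℝ f a (A v)) (μ θ)]
    congr 1
    funext s
    simp [add_sub_cancel_right, add_comm s (μ θ), ContinuousLinearMap.smul_apply, smul_eq_mul]
  rw [gradient, hkey, LinearIsometryEquiv.symm_apply_apply]
end
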